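/- arXiv:2102.13586 — 3 statements merged into one kernel-verified Lean document; each statement's English description precedes it below -/
import Mathlib

section
/- Let d ≥ 1. There exists a constant C > 0, depending only on d, such that for every Schwartz function u : ℝ^d → ℝ one has ‖∇u‖_{L^∞(ℝ^d)} ≤ C ( ‖u‖_{L²(ℝ^d)} + ‖∇²u‖_{L^∞(ℝ^d)} ). -/
/-!
If `M = ‖∇u‖_∞`, then `u` is `M`-Lipschitz, so `|u| ≥ |u(y)| - M/4` on the ball `B(y, 1/4)`, and
integrating over that ball gives `|u(y)| ≤ M/4 + c ‖u‖₂`. Taylor's formula with a unit step `v`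
gives `|∇u(x) v| ≤ |u(x + v)| + |u(x)| + ‖∇²u‖_∞`, hence
`M ≤ M/2 + 2c ‖u‖₂ + ‖∇²u‖_∞`. As `M < ∞` for a Schwartz function, the term `M/2` is absorbed.
-/

open MeasureTheory Metric
open scoped ENNReal NNReal

section Taylor

variable {E F : Type*} [NormedAddCommGroup E] [NormedSpace ℝ E]
  [NormedAddCommGroup F] [NormedSpace ℝ F] {f : E → F} {m : ℝ}

theorem norm_image_add_sub_sub_fderiv_le (hf : ContDiff ℝ 2 f)
    (hm : ∀ x, ‖iteratedFDeriv ℝ 2 f x‖ ≤ m) (x v : E) :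
    ‖f (x + v) - f x - fderiv ℝ f x v‖ ≤ m * ‖v‖ ^ 2 := by
  have hf' : Differentiable ℝ (fderiv ℝ f) :=
    (hf.fderiv_right (m := 1) le_rfl).differentiable one_ne_zero
  have hm' : ∀ y, ‖fderiv ℝ (fderiv ℝ f) y‖ ≤ m := fun y => by
    simpa [← norm_iteratedFDeriv_fderiv (n := 1)] using hm y
  have hm0 : 0 ≤ m := (norm_nonneg _).trans (hm x)
  have hball : ∀ y ∈ closedBall x ‖v‖, ‖fderiv ℝ f y - fderiv ℝ f x‖ ≤ m * ‖v‖ := fun y hy =>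
    (convex_univ.norm_image_sub_le_of_norm_fderiv_le (fun z _ => hf' z) (fun z _ => hm' z)
      trivial trivial).trans (by gcongr; exact mem_closedBall_iff_norm.1 hy)
  have := (convex_closedBall x ‖v‖).norm_image_sub_le_of_norm_fderiv_le'
    (fun y _ => (hf.differentiable two_ne_zero) y) hball (y := x + v)
    (mem_closedBall_self (norm_nonneg v)) (by simp)
  simpa [pow_two, mul_assoc] using this

theorem norm_fderiv_le_of_norm_le {S : ℝ} (hf : ContDiff ℝ 2 f)
    (hm : ∀ x, ‖iteratedFDeriv ℝ 2 f x‖ ≤ m) (hS : ∀ y, ‖f y‖ ≤ S) (x : E) :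
    ‖fderiv ℝ f x‖ ≤ 2 * S + m := by
  have hS0 : 0 ≤ S := (norm_nonneg _).trans (hS x)
  have hm0 : 0 ≤ m := (norm_nonneg _).trans (hm x)
  refine ContinuousLinearMap.opNorm_le_of_unit_norm (by positivity) fun v hv => ?_
  have htaylor := norm_image_add_sub_sub_fderiv_le hf hm x v
  rw [hv, one_pow, mul_one] at htaylor
  calc ‖fderiv ℝ f x v‖ = ‖(f (x + v) - f x) - (f (x + v) - f x - fderiv ℝ f x v)‖ := by
        rw [sub_sub_cancel]
    _ ≤ ‖f (x + v)‖ + ‖f x‖ + m :=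
        (norm_sub_le _ _).trans (add_le_add (norm_sub_le _ _) htaylor)
    _ ≤ 2 * S + m := by linarith [hS (x + v), hS x]

end Taylor

section Haar

variable {E F : Type*} [NormedAddCommGroup E] [MeasurableSpace E] [BorelSpace E]
  [NormedAddCommGroup F] (μ : Measure E) [μ.IsAddHaarMeasure] {p : ℝ≥0∞}

theorem ofReal_sub_mul_measure_ball_rpow_le_eLpNorm {f : E → F} {K : ℝ≥0}
    (hf : LipschitzWith K f) (hp0 : p ≠ 0) (hp : p ≠ ⊤) (r : ℝ) (y : E) :
    ENNReal.ofReal (‖f y‖ - K * r) * μ (ball 0 r) ^ (1 / p.toReal) ≤ eLpNorm f p μ := by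
  have hlow : ∀ z ∈ ball y r, ‖f y‖ - K * r ≤ ‖f z‖ := fun z hz => by
    have := hf.norm_sub_le y z
    have : ‖y - z‖ ≤ r := by rw [← dist_eq_norm, dist_comm]; exact (mem_ball.1 hz).le
    linarith [norm_sub_norm_le (f y) (f z), mul_le_mul_of_nonneg_left this K.coe_nonneg]
  calc ENNReal.ofReal (‖f y‖ - K * r) * μ (ball 0 r) ^ (1 / p.toReal)
      = eLpNorm ((ball y r).indicator fun _ => ENNReal.ofReal (‖f y‖ - K * r)) p μ := by
        rw [eLpNorm_indicator_const measurableSet_ball hp0 hp, Measure.addHaar_ball_center μ y,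
          enorm_eq_self]
    _ ≤ eLpNorm f p μ := eLpNorm_mono_enorm fun z => by
        by_cases hz : z ∈ ball y r
        · rw [Set.indicator_of_mem hz, enorm_eq_self, ← ofReal_norm]
          exact ENNReal.ofReal_le_ofReal (hlow z hz)
        · simp [Set.indicator_of_notMem hz]

theorem exists_norm_le_lipschitz_mul_add_eLpNorm [ProperSpace E] (hp0 : p ≠ 0) (hp : p ≠ ⊤)
    {r : ℝ} (hr : 0 < r) :
    ∃ c > 0, ∀ (f : E → F) (K : ℝ≥0), LipschitzWith K f → eLpNorm f p μ ≠ ⊤ →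
      ∀ y, ‖f y‖ ≤ K * r + c * (eLpNorm f p μ).toReal := by
  set w := (μ (ball 0 r) ^ (1 / p.toReal)).toReal
  have hw : 0 < w := ENNReal.toReal_pos
    (ENNReal.rpow_pos (measure_ball_pos μ 0 hr) measure_ball_lt_top.ne).ne'
    (ENNReal.rpow_ne_top_of_nonneg (by positivity) measure_ball_lt_top.ne)
  refine ⟨w⁻¹, inv_pos.2 hw, fun f K hf hfin y => ?_⟩
  have := ENNReal.toReal_mono hfin (ofReal_sub_mul_measure_ball_rpow_le_eLpNorm μ hf hp0 hp r y)
  rw [ENNReal.toReal_mul, ENNReal.toReal_ofReal'] at this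
  have := (le_div_iff₀ hw).2 ((mul_le_mul_of_nonneg_right (le_max_left _ 0) hw.le).trans this)
  rw [← div_eq_inv_mul]
  linarith

end Haar

theorem toReal_eLpNorm_top_le_of_forall_norm_le {X G : Type*} [MeasurableSpace X]
    [NormedAddCommGroup G] {μ : Measure X} {g : X → G} {B : ℝ} (hB : 0 ≤ B)
    (hg : ∀ x, ‖g x‖ ≤ B) : (eLpNorm g ⊤ μ).toReal ≤ B := by
  refine ENNReal.toReal_le_of_le_ofReal hB ?_
  rw [eLpNorm_exponent_top]
  exact eLpNormEssSup_le_of_ae_bound (ae_of_all _ hg)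

theorem Continuous.norm_le_toReal_eLpNorm_top {X G : Type*} [TopologicalSpace X]
    [MeasurableSpace X] [NormedAddCommGroup G] {μ : Measure X} [μ.IsOpenPosMeasure] {g : X → G}
    (hg : Continuous g) (hfin : eLpNorm g ⊤ μ ≠ ⊤) (x : X) :
    ‖g x‖ ≤ (eLpNorm g ⊤ μ).toReal := by
  have hae : ∀ᵐ y ∂μ, ‖g y‖ ≤ (eLpNorm g ⊤ μ).toReal := by
    filter_upwards [enorm_ae_le_eLpNormEssSup g μ] with y hy
    rw [← toReal_enorm, eLpNorm_exponent_top]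
    exact ENNReal.toReal_mono (by rwa [← eLpNorm_exponent_top]) hy
  have hdense := (Measure.dense_of_ae hae).closure_eq
  rw [(isClosed_le hg.norm continuous_const).closure_eq] at hdense
  exact Set.eq_univ_iff_forall.1 hdense x

namespace SchwartzMap

variable {E F : Type*} [NormedAddCommGroup E] [NormedSpace ℝ E] [NormedAddCommGroup F]
  [NormedSpace ℝ F] [MeasurableSpace E] [BorelSpace E] [SecondCountableTopology E]

theorem eLpNorm_iteratedFDeriv_top_ne_top (u : 𝓢(E, F)) (n : ℕ) (μ : Measure E) :
    eLpNorm (iteratedFDeriv ℝ n u) ⊤ μ ≠ ⊤ :=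
  (memLp_top_of_bound (u.smooth n).continuous_iteratedFDeriv'.aestronglyMeasurable _
    (ae_of_all _ (u.norm_iteratedFDeriv_le_seminorm ℝ n))).eLpNorm_ne_top

theorem norm_iteratedFDeriv_le_toReal_eLpNorm_top (u : 𝓢(E, F)) (n : ℕ) (μ : Measure E)
    [μ.IsOpenPosMeasure] (x : E) :
    ‖iteratedFDeriv ℝ n u x‖ ≤ (eLpNorm (iteratedFDeriv ℝ n u) ⊤ μ).toReal :=
  (u.smooth n).continuous_iteratedFDeriv'.norm_le_toReal_eLpNorm_top
    (u.eLpNorm_iteratedFDeriv_top_ne_top n μ) x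

theorem lipschitzWith_toNNReal_eLpNorm_top (u : 𝓢(E, F)) (μ : Measure E) [μ.IsOpenPosMeasure] :
    LipschitzWith (eLpNorm (iteratedFDeriv ℝ 1 u) ⊤ μ).toNNReal u :=
  lipschitzWith_of_nnnorm_fderiv_le u.differentiable fun x => by
    rw [← norm_toNNReal, ← norm_iteratedFDeriv_one (𝕜 := ℝ), ← ENNReal.toNNReal_toReal_eq]
    exact Real.toNNReal_le_toNNReal (u.norm_iteratedFDeriv_le_toReal_eLpNorm_top 1 μ x)

end SchwartzMap

theorem gradient_interpolation_general (d : ℕ) :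
    ∃ C > 0, ∀ u : SchwartzMap (EuclideanSpace ℝ (Fin d)) ℝ,
      eLpNorm (iteratedFDeriv ℝ 1 ⇑u) ⊤ volume ≤
        ENNReal.ofReal C *
          (eLpNorm (⇑u) 2 volume + eLpNorm (iteratedFDeriv ℝ 2 ⇑u) ⊤ volume) := by
  obtain ⟨c, hc, hsup⟩ := exists_norm_le_lipschitz_mul_add_eLpNorm
    (volume : Measure (EuclideanSpace ℝ (Fin d))) (F := ℝ) (p := 2) two_ne_zero
    ENNReal.ofNat_ne_top (r := 1 / 4) (by norm_num)
  refine ⟨2 + 4 * c, by positivity, fun u => ?_⟩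
  set M := (eLpNorm (iteratedFDeriv ℝ 1 ⇑u) ⊤ volume).toReal
  set m := (eLpNorm (iteratedFDeriv ℝ 2 ⇑u) ⊤ volume).toReal
  set A := (eLpNorm (⇑u) 2 volume).toReal
  have hu : ∀ y, ‖u y‖ ≤ M / 4 + c * A := fun y => by
    have := hsup u _ (u.lipschitzWith_toNNReal_eLpNorm_top volume)
      (u.memLp 2 volume).eLpNorm_ne_top y
    rw [ENNReal.coe_toNNReal_eq_toReal] at this
    linarith
  have hM : M ≤ 2 * (M / 4 + c * A) + m :=
    toReal_eLpNorm_top_le_of_forall_norm_le (by positivity) fun x => by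
      rw [norm_iteratedFDeriv_one]
      exact norm_fderiv_le_of_norm_le (u.smooth 2)
        (u.norm_iteratedFDeriv_le_toReal_eLpNorm_top 2 volume) hu x
  calc eLpNorm (iteratedFDeriv ℝ 1 ⇑u) ⊤ volume = ENNReal.ofReal M :=
        (ENNReal.ofReal_toReal (u.eLpNorm_iteratedFDeriv_top_ne_top 1 _)).symm
    _ ≤ ENNReal.ofReal ((2 + 4 * c) * (A + m)) := by
        gcongr
        nlinarith [show 0 ≤ A from ENNReal.toReal_nonneg, show 0 ≤ m from ENNReal.toReal_nonneg]
    _ = _ := by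
        rw [ENNReal.ofReal_mul (by positivity), ENNReal.ofReal_add ENNReal.toReal_nonneg
          ENNReal.toReal_nonneg, ENNReal.ofReal_toReal (u.memLp 2 volume).eLpNorm_ne_top,
          ENNReal.ofReal_toReal (u.eLpNorm_iteratedFDeriv_top_ne_top 2 _)]

/-- **Low/high frequency interpolation inequality.** There is a constant `C = C(d)` such
that every Schwartz function `u : ℝ^d → ℝ` satisfies
`‖∇u‖_{L^∞} ≤ C (‖u‖_{L²} + ‖∇²u‖_{L^∞})`. -/
theorem gradient_interpolation (d : ℕ) (hd : 1 ≤ d) :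
    ∃ C > 0, ∀ u : SchwartzMap (EuclideanSpace ℝ (Fin d)) ℝ,
      eLpNorm (iteratedFDeriv ℝ 1 ⇑u) ⊤ volume ≤
        ENNReal.ofReal C *
          (eLpNorm (⇑u) 2 volume + eLpNorm (iteratedFDeriv ℝ 2 ⇑u) ⊤ volume) :=
  gradient_interpolation_general d
end

section
/- Let d ≥ 1. There exists a constant C > 0, depending only on d, such that for every Schwartz function u : ℝ^d → ℝ one has ‖u‖_{L^∞(ℝ^d)} ≤ C ( ‖u‖_{L²(ℝ^d)} + ‖∇u‖_{L^∞(ℝ^d)} ). -/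
/-! If `u` is `L`-Lipschitz with `L = ‖∇u‖_∞` and `|u x| = M`, then `|u| ≥ M - L` on the unit ball
around `x`, so `‖u‖_{L²} ≥ (M - L) |B₁|^{1/2}`. Hence `‖u‖_∞ ≤ ‖∇u‖_∞ + |B₁|^{-1/2} ‖u‖_{L²}`;
the gradient controls the high frequencies directly, with no Fourier splitting. -/

open MeasureTheory Metric
open scoped ENNReal NNReal

section

variable {α ε : Type*} [MeasurableSpace α] {μ : Measure α}

theorem mul_measure_rpow_le_eLpNorm [ENorm ε] {p : ℝ≥0∞} {f : α → ε} {s : Set α} {c : ℝ≥0∞}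
    (hs : MeasurableSet s) (hp0 : p ≠ 0) (hp : p ≠ ∞) (h : ∀ y ∈ s, c ≤ ‖f y‖ₑ) :
    c * μ s ^ (1 / p.toReal) ≤ eLpNorm f p μ := by
  rw [← enorm_eq_self c, ← eLpNorm_indicator_const hs hp0 hp]
  refine eLpNorm_mono_enorm fun y => ?_
  by_cases hy : y ∈ s
  · simpa [hy] using h y hy
  · simp [hy]

theorem Continuous.enorm_le_eLpNormEssSup [TopologicalSpace α] [μ.IsOpenPosMeasure]
    [TopologicalSpace ε] [ContinuousENorm ε] {g : α → ε} (hg : Continuous g) (x : α) :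
    ‖g x‖ₑ ≤ eLpNormEssSup g μ := by
  have hdense := μ.dense_of_ae (enorm_ae_le_eLpNormEssSup g μ)
  exact (isClosed_le hg.enorm continuous_const).closure_subset_iff.2 subset_rfl
    (hdense.closure_eq.symm ▸ Set.mem_univ x)

end

theorem LipschitzWith.enorm_le_add_of_mem_ball {X F : Type*} [PseudoMetricSpace X]
    [SeminormedAddGroup F] {f : X → F} {K : ℝ≥0} (hf : LipschitzWith K f) {x y : X} {r : ℝ}
    (hy : y ∈ ball x r) : ‖f x‖ₑ ≤ ‖f y‖ₑ + K * ENNReal.ofReal r := by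
  calc ‖f x‖ₑ = edist (f x) 0 := (edist_zero_right _).symm
    _ ≤ edist (f y) 0 + edist (f x) (f y) := by rw [add_comm]; exact edist_triangle _ _ _
    _ ≤ ‖f y‖ₑ + K * ENNReal.ofReal r := by
      rw [edist_zero_right]
      gcongr
      exact (hf.edist_le_mul x y).trans (by gcongr; exact (edist_lt_ofReal.2 (mem_ball'.1 hy)).le)

section AddHaar

variable {E F : Type*} [NormedAddCommGroup E] [MeasurableSpace E] [BorelSpace E]
  [SeminormedAddGroup F] (μ : Measure E) [μ.IsAddHaarMeasure] {p : ℝ≥0∞}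

theorem LipschitzWith.enorm_sub_mul_measure_ball_le_eLpNorm {f : E → F} {K : ℝ≥0}
    (hf : LipschitzWith K f) (x : E) (r : ℝ) (hp0 : p ≠ 0) (hp : p ≠ ∞) :
    (‖f x‖ₑ - K * ENNReal.ofReal r) * μ (ball 0 r) ^ (1 / p.toReal) ≤ eLpNorm f p μ := by
  rw [← μ.addHaar_ball_center x]
  exact mul_measure_rpow_le_eLpNorm measurableSet_ball hp0 hp fun y hy =>
    tsub_le_iff_right.2 (hf.enorm_le_add_of_mem_ball hy)

theorem LipschitzWith.eLpNorm_top_le [ProperSpace E] {f : E → F} {K : ℝ≥0}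
    (hf : LipschitzWith K f) {r : ℝ} (hr : 0 < r) (hp0 : p ≠ 0) (hp : p ≠ ∞) :
    eLpNorm f ∞ μ ≤ K * ENNReal.ofReal r + eLpNorm f p μ / μ (ball 0 r) ^ (1 / p.toReal) := by
  have hball_pos : 0 < μ (ball 0 r) ^ (1 / p.toReal) :=
    ENNReal.rpow_pos (measure_ball_pos μ 0 hr) measure_ball_lt_top.ne
  have hball_fin : μ (ball 0 r) ^ (1 / p.toReal) ≠ ∞ :=
    ENNReal.rpow_ne_top_of_nonneg (by positivity) measure_ball_lt_top.ne
  rw [eLpNorm_exponent_top]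
  refine eLpNormEssSup_le_of_ae_enorm_bound (Filter.Eventually.of_forall fun x => ?_)
  rw [← tsub_le_iff_left, ENNReal.le_div_iff_mul_le (.inl hball_pos.ne') (.inl hball_fin)]
  exact hf.enorm_sub_mul_measure_ball_le_eLpNorm μ x r hp0 hp

end AddHaar

theorem lipschitzWith_of_eLpNorm_iteratedFDeriv_one_ne_top {E F : Type*} [NormedAddCommGroup E]
    [NormedSpace ℝ E] [MeasurableSpace E] [NormedAddCommGroup F] [NormedSpace ℝ F]
    (μ : Measure E) [μ.IsOpenPosMeasure] {f : E → F} (hf : ContDiff ℝ 1 f)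
    (h : eLpNorm (iteratedFDeriv ℝ 1 f) ∞ μ ≠ ∞) :
    LipschitzWith (eLpNorm (iteratedFDeriv ℝ 1 f) ∞ μ).toNNReal f := by
  refine lipschitzWith_of_nnnorm_fderiv_le (hf.differentiable one_ne_zero) fun z => ?_
  rw [← enorm_le_coe, ENNReal.coe_toNNReal h, eLpNorm_exponent_top]
  have := (hf.continuous_iteratedFDeriv le_rfl).enorm_le_eLpNormEssSup (μ := μ) z
  rwa [← ofReal_norm, norm_iteratedFDeriv_one, ofReal_norm] at this

theorem add_mul_le_one_add_mul_add (a b c : ℝ≥0∞) : a + b * c ≤ (1 + c) * (b + a) := by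
  calc a + b * c ≤ (b + a) + c * (b + a) := by
        rw [mul_comm b]
        exact add_le_add le_add_self (by gcongr; exact le_self_add)
    _ = (1 + c) * (b + a) := by ring

theorem sup_interpolation_general (d : ℕ) :
    ∃ C > 0, ∀ u : SchwartzMap (EuclideanSpace ℝ (Fin d)) ℝ,
      eLpNorm (⇑u) ⊤ volume ≤
        ENNReal.ofReal C *
          (eLpNorm (⇑u) 2 volume + eLpNorm (iteratedFDeriv ℝ 1 ⇑u) ⊤ volume) := by
  set c := (volume (ball (0 : EuclideanSpace ℝ (Fin d)) 1) ^ (1 / (2 : ℝ≥0∞).toReal))⁻¹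
  have hc : c ≠ ∞ := ENNReal.inv_ne_top.2
    (ENNReal.rpow_pos (measure_ball_pos _ 0 one_pos) measure_ball_lt_top.ne).ne'
  refine ⟨1 + c.toReal, by positivity, fun u => ?_⟩
  rw [ENNReal.ofReal_add zero_le_one ENNReal.toReal_nonneg, ENNReal.ofReal_one,
    ENNReal.ofReal_toReal hc]
  by_cases hL : eLpNorm (iteratedFDeriv ℝ 1 ⇑u) ⊤ volume = ∞
  · simp [hL]
  calc eLpNorm (⇑u) ⊤ volume
      ≤ (eLpNorm (iteratedFDeriv ℝ 1 ⇑u) ⊤ volume).toNNReal * ENNReal.ofReal 1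
          + eLpNorm (⇑u) 2 volume / _ :=
        (lipschitzWith_of_eLpNorm_iteratedFDeriv_one_ne_top volume (u.smooth 1) hL).eLpNorm_top_le
          volume one_pos two_ne_zero ENNReal.ofNat_ne_top
    _ = eLpNorm (iteratedFDeriv ℝ 1 ⇑u) ⊤ volume + eLpNorm (⇑u) 2 volume * c := by
        rw [ENNReal.coe_toNNReal hL, ENNReal.ofReal_one, mul_one, div_eq_mul_inv]
    _ ≤ _ := add_mul_le_one_add_mul_add _ _ _

/-- **Low/high frequency interpolation inequality.** There is a constant `C = C(d)` such
that every Schwartz function `u : ℝ^d → ℝ` satisfies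
`‖u‖_{L^∞} ≤ C (‖u‖_{L²} + ‖∇u‖_{L^∞})`. -/
theorem sup_interpolation (d : ℕ) (hd : 1 ≤ d) :
    ∃ C > 0, ∀ u : SchwartzMap (EuclideanSpace ℝ (Fin d)) ℝ,
      eLpNorm (⇑u) ⊤ volume ≤
        ENNReal.ofReal C *
          (eLpNorm (⇑u) 2 volume + eLpNorm (iteratedFDeriv ℝ 1 ⇑u) ⊤ volume) :=
  sup_interpolation_general d
end

section
/- Let E : [0, ∞) → [0, ∞) be continuous, let φ : [0, ∞) → [0, ∞) be continuous and non-decreasing, and let E₀ > 0, C ≥ 1, c > 0. Assume that for every t ≥ 0 one has E(t) ≤ C ( E₀ + ∫₀^t E(s)² ds ) · exp(c t φ(t)). Define T* = sup{ T ≥ 0 : ∫₀^T E(s)² ds ≤ E₀ }. Then either T* = +∞, or T* < +∞ and 4 C² E₀ T* exp( 2 c T* φ(T*) ) ≥ 1. -/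
open MeasureTheory Real

/-- **Bootstrap / Grönwall-type lemma.** If a continuous nonnegative function `E`
satisfies `E(t) ≤ C (E₀ + ∫₀^t E²) e^{c t φ(t)}` for a nondecreasing `φ`, then the
time `T* = sup{T ≥ 0 : ∫₀^T E² ≤ E₀}` is either infinite (i.e. the set is unbounded)
or satisfies `4 C² E₀ T* e^{2 c T* φ(T*)} ≥ 1`. -/
theorem bootstrap_time_lower_bound (E φ : ℝ → ℝ)
    (hE_cont : ContinuousOn E (Set.Ici 0)) (hE_nonneg : ∀ t ≥ (0 : ℝ), 0 ≤ E t)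
    (hφ_cont : ContinuousOn φ (Set.Ici 0)) (hφ_nonneg : ∀ t ≥ (0 : ℝ), 0 ≤ φ t)
    (hφ_mono : MonotoneOn φ (Set.Ici 0))
    (E₀ C c : ℝ) (hE₀ : 0 < E₀) (hC : 1 ≤ C) (hc : 0 < c)
    (h_main : ∀ t ≥ (0 : ℝ),
      E t ≤ C * (E₀ + ∫ s in (0 : ℝ)..t, E s ^ 2) * Real.exp (c * t * φ t))
    (S : Set ℝ) (hS : S = {T : ℝ | 0 ≤ T ∧ (∫ s in (0 : ℝ)..T, E s ^ 2) ≤ E₀})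
    (hbdd : BddAbove S) :
    1 ≤ 4 * C ^ 2 * E₀ * sSup S * Real.exp (2 * c * sSup S * φ (sSup S)) := by
  set F : ℝ → ℝ := fun x => ∫ s in (0 : ℝ)..x, E s ^ 2 with hF
  have h0S : (0 : ℝ) ∈ S := by
    rw [hS]; constructor
    · rfl
    · simp [intervalIntegral.integral_same, hE₀.le]
  have hSne : S.Nonempty := ⟨0, h0S⟩
  set T := sSup S with hT
  have hT0 : 0 ≤ T := le_csSup hbdd h0S
  set M := T + 1 with hM
  have hTM : T < M := by simp [hM]
  have hM0 : (0 : ℝ) ≤ M := by linarith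
  -- integrability of E^2 on [0, M]
  have hE2cont : ContinuousOn (fun s => E s ^ 2) (Set.Ici 0) := hE_cont.pow 2
  have hIntM : IntegrableOn (fun s => E s ^ 2) (Set.uIcc 0 M) volume := by
    apply (hE2cont.mono ?_).integrableOn_compact isCompact_uIcc
    rw [Set.uIcc_of_le hM0]
    exact fun x hx => hx.1
  have hFcont : ContinuousOn F (Set.Icc 0 M) := by
    have := intervalIntegral.continuousOn_primitive_interval (a := (0:ℝ)) (b := M)
      (f := fun s => E s ^ 2) (μ := volume) hIntM
    rwa [Set.uIcc_of_le hM0] at this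
  have hII : ∀ a b : ℝ, a ∈ Set.Icc (0:ℝ) M → b ∈ Set.Icc (0:ℝ) M →
      IntervalIntegrable (fun s => E s ^ 2) volume a b := by
    intro a b ha hb
    apply ContinuousOn.intervalIntegrable
    apply hE2cont.mono
    intro x hx
    rcases Set.mem_uIcc.1 hx with h | h
    · exact le_trans ha.1 h.1
    · exact le_trans hb.1 h.1
  -- S ⊆ Icc 0 M
  have hSsub : S ⊆ Set.Icc 0 M := by
    intro x hx
    exact ⟨(hS ▸ hx).1, le_trans (le_csSup hbdd hx) hTM.le⟩
  have hTIcc : T ∈ Set.Icc (0:ℝ) M := ⟨hT0, hTM.le⟩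
  -- F T ≤ E₀
  have hFTle : F T ≤ E₀ := by
    have hcl : T ∈ closure S := csSup_mem_closure hSne hbdd
    have hne : Filter.NeBot (nhdsWithin T S) := mem_closure_iff_nhdsWithin_neBot.1 hcl
    have htend : Filter.Tendsto F (nhdsWithin T S) (nhds (F T)) :=
      ((hFcont T hTIcc).tendsto).mono_left (nhdsWithin_mono T hSsub)
    refine le_of_tendsto htend ?_
    filter_upwards [eventually_mem_nhdsWithin] with x hx
    exact (hS ▸ hx).2
  -- E₀ ≤ F T
  have hFTge : E₀ ≤ F T := by
    have hne : Filter.NeBot (nhdsWithin T (Set.Ioo T M)) := left_nhdsWithin_Ioo_neBot hTM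
    have htend : Filter.Tendsto F (nhdsWithin T (Set.Ioo T M)) (nhds (F T)) :=
      ((hFcont T hTIcc).tendsto).mono_left
        (nhdsWithin_mono T (fun x hx => ⟨le_trans hT0 hx.1.le, hx.2.le⟩))
    refine ge_of_tendsto htend ?_
    filter_upwards [eventually_mem_nhdsWithin] with x hx
    by_contra hlt
    push_neg at hlt
    have hxS : x ∈ S := by rw [hS]; exact ⟨le_trans hT0 hx.1.le, hlt.le⟩
    exact absurd (le_csSup hbdd hxS) (not_le.2 hx.1)
  have hFT : F T = E₀ := le_antisymm hFTle hFTge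
  -- pointwise bound on [0, T]
  have hbound : ∀ t ∈ Set.Icc (0:ℝ) T,
      E t ^ 2 ≤ 4 * C ^ 2 * E₀ ^ 2 * Real.exp (2 * c * T * φ T) := by
    intro t ht
    have ht0 : 0 ≤ t := ht.1
    have htM : t ∈ Set.Icc (0:ℝ) M := ⟨ht0, le_trans ht.2 hTM.le⟩
    -- F t ≤ F T
    have hFtFT : F t ≤ F T := by
      have hsplit : F t + (∫ s in t..T, E s ^ 2) = F T :=
        intervalIntegral.integral_add_adjacent_intervals
          (hII 0 t (Set.left_mem_Icc.2 hM0) htM) (hII t T htM hTIcc)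
      have hnn : 0 ≤ ∫ s in t..T, E s ^ 2 :=
        intervalIntegral.integral_nonneg ht.2 (fun s hs => sq_nonneg _)
      linarith
    have hFtE₀ : F t ≤ E₀ := hFT ▸ hFtFT
    have hexp : Real.exp (c * t * φ t) ≤ Real.exp (c * T * φ T) := by
      apply Real.exp_le_exp.2
      have hφle : φ t ≤ φ T := hφ_mono ht0 hT0 ht.2
      have hφt0 : 0 ≤ φ t := hφ_nonneg t ht0
      have h1 : t * φ t ≤ T * φ T := mul_le_mul ht.2 hφle hφt0 hT0
      calc c * t * φ t = c * (t * φ t) := by ring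
        _ ≤ c * (T * φ T) := mul_le_mul_of_nonneg_left h1 hc.le
        _ = c * T * φ T := by ring
    have hEt := h_main t ht0
    have hEt2 : E t ≤ C * (2 * E₀) * Real.exp (c * T * φ T) := by
      calc E t ≤ C * (E₀ + F t) * Real.exp (c * t * φ t) := hEt
        _ ≤ C * (2 * E₀) * Real.exp (c * T * φ T) := by
            have h1 : C * (E₀ + F t) ≤ C * (2 * E₀) := by nlinarith
            have hFt0 : 0 ≤ F t :=
              intervalIntegral.integral_nonneg ht0 (fun s _ => sq_nonneg _)
            have h2 : 0 ≤ C * (E₀ + F t) := by nlinarith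
            nlinarith [Real.exp_pos (c * t * φ t), Real.exp_pos (c * T * φ T)]
    have hEnn := hE_nonneg t ht0
    have h2exp : Real.exp (c * T * φ T) ^ 2 = Real.exp (2 * c * T * φ T) := by
      rw [← Real.exp_nat_mul]; ring_nf
    nlinarith [sq_nonneg (E t), Real.exp_pos (c * T * φ T), mul_self_nonneg (C * (2*E₀))]
  -- integrate the bound
  have hint : F T ≤ T * (4 * C ^ 2 * E₀ ^ 2 * Real.exp (2 * c * T * φ T)) := by
    have := intervalIntegral.integral_mono_on (μ := volume) (a := 0) (b := T)
      (f := fun s => E s ^ 2)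
      (g := fun _ => 4 * C ^ 2 * E₀ ^ 2 * Real.exp (2 * c * T * φ T))
      hT0 (hII 0 T (Set.left_mem_Icc.2 hM0) hTIcc) intervalIntegrable_const hbound
    rw [intervalIntegral.integral_const, smul_eq_mul, sub_zero] at this
    exact this
  rw [hFT] at hint
  have hexp_pos := Real.exp_pos (2 * c * T * φ T)
  nlinarith [hint, hE₀, hexp_pos]
end
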